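/- The operators Γ_A are in general not commutative: there exist nonempty sets T, X, Y, a nonempty set Ω of functions T → Y, a nonempty set Z of functions T → X, nonempty subsets H₁ ⊆ H₂ of T, and a multifunction α such that Γ_{H₁}(Γ_{H₂}(α)) ≠ Γ_{H₂}(Γ_{H₁}(α)). -/

import Mathlib

/-!
If all elements of `Z` agree on `H₁`, then `Γ_{H₁}` fixes every nonempty-valued multifunction,
so `Γ_{H₂} (Γ_{H₁} α) = Γ_{H₂} α`. On the other hand, if in addition all scenarios agree on
`H₁`, then `Γ_{H₁} β` vanishes identically as soon as `β` vanishes at a single scenario. So it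
suffices to find a nonempty-valued `α` for which `Γ_{H₂} α` is empty at one scenario but not
everywhere: on `T = {0, 1, 2}`, with `H₁ = {0}`, `H₂ = {0, 1}` and `Z` the Boolean paths starting
at `false`, take `α ω = {z | z 1 = ω 1 && ω 2}`.
-/

open Set

def resSet {T X : Type*} {Z : Set (T → X)} (A : Set T) (F : Set ↥Z) : Set (↥A → X) :=
  (fun h : ↥Z => A.restrict (h : T → X)) '' F

def NonAnt {T X Y : Type*} (Ω : Set (T → Y)) (Z : Set (T → X)) (A : Set T)
    (z : ↥Ω → Set ↥Z) : Prop :=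
  ∀ ω ω' : ↥Ω, A.restrict (ω : T → Y) = A.restrict (ω' : T → Y) →
    resSet A (z ω) = resSet A (z ω')

def Nna {T X Y : Type*} (Ω : Set (T → Y)) (Z : Set (T → X)) (ℋ : Set (Set T))
    (α : ↥Ω → Set ↥Z) : Set (↥Ω → Set ↥Z) :=
  {z | (∀ A ∈ ℋ, NonAnt Ω Z A z) ∧ ∀ ω, z ω ⊆ α ω}

def NnaNE {T X Y : Type*} (Ω : Set (T → Y)) (Z : Set (T → X)) (ℋ : Set (Set T))
    (α : ↥Ω → Set ↥Z) : Set (↥Ω → Set ↥Z) :=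
  {z ∈ Nna Ω Z ℋ α | ∀ ω, (z ω).Nonempty}

def Gamma {T X Y : Type*} (Ω : Set (T → Y)) (Z : Set (T → X)) (A : Set T)
    (α : ↥Ω → Set ↥Z) : ↥Ω → Set ↥Z :=
  fun ω => {h ∈ α ω |
    A.restrict (h : T → X) ∈
      ⋂ ω' ∈ {η : ↥Ω | A.restrict (η : T → Y) = A.restrict (ω : T → Y)}, resSet A (α ω')}

section Gamma

variable {T X Y : Type*} {Ω : Set (T → Y)} {Z : Set (T → X)} {A : Set T}
  {α : ↥Ω → Set ↥Z} {ω : ↥Ω} {h : ↥Z}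

theorem mem_Gamma :
    h ∈ Gamma Ω Z A α ω ↔ h ∈ α ω ∧ ∀ ω' : ↥Ω,
      A.domRestrict (ω' : T → Y) = A.domRestrict (ω : T → Y) →
        ∃ z ∈ α ω', A.domRestrict (z : T → X) = A.domRestrict (h : T → X) := by
  simp only [Gamma, resSet, mem_iInter₂, mem_image]
  rfl

theorem Gamma_eq_empty_of_eq_empty {ω' : ↥Ω}
    (hω' : A.domRestrict (ω' : T → Y) = A.domRestrict (ω : T → Y)) (hα : α ω' = ∅) :
    Gamma Ω Z A α ω = ∅ := by
  refine eq_empty_of_forall_notMem fun h hh => ?_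
  obtain ⟨z, hz, -⟩ := (mem_Gamma.mp hh).2 ω' hω'
  simp [hα] at hz

theorem Gamma_eq_self_of_domRestrict_eq
    (hZ : ∀ z z' : ↥Z, A.domRestrict (z : T → X) = A.domRestrict (z' : T → X))
    (hα : ∀ ω, (α ω).Nonempty) : Gamma Ω Z A α = α := by
  funext ω
  ext h
  refine ⟨fun hh => (mem_Gamma.mp hh).1, fun hh => mem_Gamma.mpr ⟨hh, fun ω' _ => ?_⟩⟩
  obtain ⟨z, hz⟩ := hα ω'
  exact ⟨z, hz, hZ z h⟩

end Gamma

namespace GammaNoncomm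

def Z₀ : Set (Fin 3 → Bool) := {z | z 0 = false}

def H₁ : Set (Fin 3) := {0}

def H₂ : Set (Fin 3) := {0, 1}

def α₀ : ↥(univ : Set (Fin 3 → Bool)) → Set ↥Z₀ :=
  fun ω => {z | (z : Fin 3 → Bool) 1 = ((ω : Fin 3 → Bool) 1 && (ω : Fin 3 → Bool) 2)}

def pathFalse : ↥Z₀ := ⟨![false, false, false], rfl⟩

def scenario (b c : Bool) : ↥(univ : Set (Fin 3 → Bool)) := ⟨![false, b, c], trivial⟩

theorem domRestrict_H₁_eq_of_apply_zero_eq {β : Type*} {f g : Fin 3 → β} (hfg : f 0 = g 0) :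
    H₁.domRestrict f = H₁.domRestrict g :=
  funext fun ⟨_, ht⟩ => by rcases ht with rfl; exact hfg

theorem domRestrict_H₁_eq (z z' : ↥Z₀) :
    H₁.domRestrict (z : Fin 3 → Bool) = H₁.domRestrict (z' : Fin 3 → Bool) :=
  domRestrict_H₁_eq_of_apply_zero_eq (z.2.trans z'.2.symm)

theorem α₀_nonempty (ω) : (α₀ ω).Nonempty :=
  ⟨⟨![false, (ω : Fin 3 → Bool) 1 && (ω : Fin 3 → Bool) 2, false], rfl⟩, rfl⟩

theorem apply_one_eq_of_domRestrict_H₂_eq {f g : Fin 3 → Bool}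
    (hfg : H₂.domRestrict f = H₂.domRestrict g) : f 1 = g 1 :=
  congrFun hfg ⟨1, by simp [H₂]⟩

theorem Gamma_H₂_α₀_scenario_true_true : Gamma univ Z₀ H₂ α₀ (scenario true true) = ∅ := by
  refine eq_empty_of_forall_notMem fun h hh => ?_
  obtain ⟨hα, hclass⟩ := mem_Gamma.mp hh
  obtain ⟨z, hz, hzh⟩ := hclass (scenario true false)
    (funext fun ⟨t, ht⟩ => by rcases ht with rfl | rfl <;> rfl)
  have hz1 := apply_one_eq_of_domRestrict_H₂_eq hzh
  simp_all [α₀, scenario]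

theorem pathFalse_mem_Gamma_H₂_α₀ : pathFalse ∈ Gamma univ Z₀ H₂ α₀ (scenario false false) := by
  refine mem_Gamma.mpr ⟨rfl, fun ω' hω' => ⟨pathFalse, ?_, rfl⟩⟩
  have h1 := apply_one_eq_of_domRestrict_H₂_eq hω'
  simp_all [α₀, pathFalse, scenario]

end GammaNoncomm

open GammaNoncomm in
/-- The operators `Γ_A` are in general not commutative. -/
theorem stmt17 :
    ∃ (T X Y : Type) (_ : Nonempty T) (_ : Nonempty X) (_ : Nonempty Y)
      (Ω : Set (T → Y)) (Z : Set (T → X)) (_ : Ω.Nonempty) (_ : Z.Nonempty)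
      (H₁ H₂ : Set T) (_ : H₁.Nonempty) (_ : H₂.Nonempty) (_ : H₁ ⊆ H₂)
      (α : ↥Ω → Set ↥Z),
      Gamma Ω Z H₁ (Gamma Ω Z H₂ α) ≠ Gamma Ω Z H₂ (Gamma Ω Z H₁ α) := by
  refine ⟨Fin 3, Bool, Bool, inferInstance, inferInstance, inferInstance, univ, Z₀,
    univ_nonempty, ⟨pathFalse, pathFalse.2⟩, H₁, H₂, singleton_nonempty 0, insert_nonempty 0 _,
    singleton_subset_iff.mpr (mem_insert 0 _), α₀, fun hcomm => ?_⟩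
  have hlhs : Gamma univ Z₀ H₁ (Gamma univ Z₀ H₂ α₀) (scenario false false) = ∅ :=
    Gamma_eq_empty_of_eq_empty (ω' := scenario true true) (domRestrict_H₁_eq_of_apply_zero_eq rfl)
      Gamma_H₂_α₀_scenario_true_true
  rw [hcomm, Gamma_eq_self_of_domRestrict_eq domRestrict_H₁_eq α₀_nonempty] at hlhs
  exact hlhs.subset pathFalse_mem_Gamma_H₂_α₀
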